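/- arXiv:1109.6779 — 3 statements merged into one kernel-verified Lean document; each statement's English description precedes it below -/
import Mathlib

section
/- Equivalence (1 ⇒ 2): if sup_{n≥0} η_n(v) < ∞ where v = e^V, and (H1) drift holds (so sublevel sets C_d satisfy η_n(C_d^c) ≤ η_n(v)e^{-d}) and (H3) local minorization holds, then inf_{n≥0} λ_n > 0, where λ_n = η_n(G_n). -/
open MeasureTheory ENNReal Filter Topology

/-!
Take a level `d` so large that `e^{-d} · sup_n η_n(v) < 1`. By the minorization, `G_n ≥ c` on the
sublevel set `C_d = {V ≤ d}` with `c = min (ε_d ν_d(C_d)) 1 > 0`, and off `C_d` we have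
`1 ≤ e^{-d} v`; hence `c ≤ G_n + c e^{-d} v` everywhere. Integrating against the probability
measure `η_n` gives `λ_n ≥ c (1 - e^{-d} sup_n η_n(v)) > 0` uniformly in `n`.
-/

lemma exists_ge_ofReal_exp_neg_mul_lt_one {S : ℝ≥0∞} (hS : S ≠ ∞) (a : ℝ) :
    ∃ d, a ≤ d ∧ ENNReal.ofReal (Real.exp (-d)) * S < 1 := by
  have hlim : Tendsto (fun d : ℝ => ENNReal.ofReal (Real.exp (-d)) * S) atTop (𝓝 0) := by
    simpa using ENNReal.Tendsto.mul_const
      (ENNReal.tendsto_ofReal Real.tendsto_exp_neg_atTop_nhds_zero) (Or.inr hS)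
  exact ((eventually_ge_atTop a).and (hlim.eventually (gt_mem_nhds zero_lt_one))).exists

lemma one_le_ofReal_exp_neg_mul_ofReal_exp {d y : ℝ} (h : d ≤ y) :
    1 ≤ ENNReal.ofReal (Real.exp (-d)) * ENNReal.ofReal (Real.exp y) := by
  rw [← ENNReal.ofReal_mul (Real.exp_nonneg _), ← Real.exp_add, ENNReal.one_le_ofReal]
  exact Real.one_le_exp (by linarith)

lemma le_add_mul_ofReal_exp_of_le_on_sublevel {X : Type*} {g : X → ℝ≥0∞} {V : X → ℝ}
    {c : ℝ≥0∞} {d : ℝ} (hg : ∀ x, V x ≤ d → c ≤ g x) (x : X) :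
    c ≤ g x + c * ENNReal.ofReal (Real.exp (-d)) * ENNReal.ofReal (Real.exp (V x)) := by
  rcases le_or_gt (V x) d with hx | hx
  · exact le_add_right (hg x hx)
  · refine le_add_left ?_
    calc c = c * 1 := (mul_one c).symm
      _ ≤ _ := by
        rw [mul_assoc]
        gcongr
        exact one_le_ofReal_exp_neg_mul_ofReal_exp hx.le

lemma le_lintegral_add_mul_lintegral {X : Type*} [MeasurableSpace X] {η : Measure X}
    [IsProbabilityMeasure η] {f w : X → ℝ≥0∞} (hf : Measurable f) {c r : ℝ≥0∞} (hr : r ≠ ∞)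
    (h : ∀ x, c ≤ f x + r * w x) :
    c ≤ ∫⁻ x, f x ∂η + r * ∫⁻ x, w x ∂η :=
  calc c = ∫⁻ _, c ∂η := by rw [lintegral_const, measure_univ, mul_one]
    _ ≤ ∫⁻ x, f x + r * w x ∂η := lintegral_mono h
    _ = ∫⁻ x, f x ∂η + r * ∫⁻ x, w x ∂η := by
      rw [lintegral_add_left hf, lintegral_const_mul' r _ hr]

lemma smul_measure_apply_le {X : Type*} [MeasurableSpace X] (m : Measure X)
    [IsProbabilityMeasure m] (a : ℝ≥0∞) (s : Set X) : (a • m) s ≤ a := by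
  rw [Measure.smul_apply, smul_eq_mul]
  exact mul_le_of_le_one_right' prob_le_one

theorem fk_eta_bounded_implies_lambda_bounded_below_general
    {X : Type*} [MeasurableSpace X]
    (M : ℕ → X → Measure X) (hM : ∀ n x, IsProbabilityMeasure (M n x))
    (G : ℕ → X → ℝ≥0∞) (hGmeas : ∀ n, Measurable (G n))
    (Q : ℕ → X → Measure X) (hQ : ∀ n x, Q (n + 1) x = (G n x) • M (n + 1) x)
    (γ : ℕ → Measure X)
    (hγpos : ∀ n, 0 < γ n Set.univ) (hγfin : ∀ n, γ n Set.univ < ⊤)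
    (η : ℕ → Measure X) (hη : ∀ n, η n = (γ n Set.univ)⁻¹ • γ n)
    (lam : ℕ → ℝ≥0∞) (hlam : ∀ n, lam n = ∫⁻ x, G n x ∂ η n)
    (V : X → ℝ)
    (v : X → ℝ≥0∞) (hv : ∀ x, v x = ENNReal.ofReal (Real.exp (V x)))
    (dlow : ℝ)
    -- (H3) local minorization
    (hminor : ∀ d : ℝ, dlow ≤ d → ∃ (ν : Measure X) (εminus : ℝ≥0∞),
      IsProbabilityMeasure ν ∧ 0 < εminus ∧ 0 < ν {z | V z ≤ d} ∧
      ∀ n x, V x ≤ d → ∀ A : Set X, MeasurableSet A →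
        εminus * ν ({z | V z ≤ d} ∩ A) ≤ Q (n + 1) x ({z | V z ≤ d} ∩ A))
    -- (1): uniformly bounded v-moments of the prediction filters
    (hbdd : (⨆ n, ∫⁻ x, v x ∂ η n) < ⊤) :
    0 < ⨅ n, lam n := by
  set S := ⨆ n, ∫⁻ x, v x ∂ η n
  have hηprob : ∀ n, IsProbabilityMeasure (η n) := fun n =>
    ⟨by rw [hη n, Measure.smul_apply, smul_eq_mul,
      ENNReal.inv_mul_cancel (hγpos n).ne' (hγfin n).ne]⟩
  obtain ⟨d, hd, hdS⟩ := exists_ge_ofReal_exp_neg_mul_lt_one hbdd.ne dlow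
  obtain ⟨ν, ε, -, hε, hνC, hmin⟩ := hminor d hd
  set c := min (ε * ν {z | V z ≤ d}) 1
  set κ := ENNReal.ofReal (Real.exp (-d))
  have hc0 : c ≠ 0 := (lt_min (ENNReal.mul_pos hε.ne' hνC.ne') zero_lt_one).ne'
  have hctop : c ≠ ∞ := ne_top_of_le_ne_top one_ne_top (min_le_right _ _)
  have hG : ∀ n x, V x ≤ d → c ≤ G n x := fun n x hx => by
    have := hM (n + 1) x
    calc c ≤ ε * ν {z | V z ≤ d} := min_le_left _ _
      _ ≤ Q (n + 1) x {z | V z ≤ d} := by simpa using hmin n x hx Set.univ MeasurableSet.univ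
      _ ≤ G n x := hQ n x ▸ smul_measure_apply_le ..
  have hlam_ge : ∀ n, c - c * κ * S ≤ lam n := fun n => by
    refine tsub_le_iff_right.mpr ?_
    calc c ≤ ∫⁻ x, G n x ∂η n + c * κ * ∫⁻ x, v x ∂η n :=
          le_lintegral_add_mul_lintegral (hGmeas n) (mul_ne_top hctop ofReal_ne_top)
            fun x => hv x ▸ le_add_mul_ofReal_exp_of_le_on_sublevel (hG n) x
      _ ≤ lam n + c * κ * S := by
          rw [hlam n]
          gcongr
          exact le_iSup (fun n => ∫⁻ x, v x ∂η n) n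
  have hmargin : c * κ * S < c := by
    rw [mul_assoc]
    simpa using ENNReal.mul_lt_mul_right hc0 hctop hdS
  exact (tsub_pos_of_lt hmargin).trans_le (le_iInf hlam_ge)

/-- (1 ⇒ 2).  If `sup_{n≥0} η_n(v) < ∞` with `v = e^V`, the
multiplicative drift (H1) holds, and the local minorization (H3) holds, then
`inf_{n≥0} λ_n > 0`, where `λ_n = η_n(G_n)`. -/
theorem fk_eta_bounded_implies_lambda_bounded_below
    {X : Type*} [MeasurableSpace X]
    (μ : Measure X) [IsProbabilityMeasure μ]
    (M : ℕ → X → Measure X) (hM : ∀ n x, IsProbabilityMeasure (M n x))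
    (G : ℕ → X → ℝ≥0∞) (hGmeas : ∀ n, Measurable (G n))
    (hGpos : ∀ n x, 0 < G n x) (hGbdd : ∀ n, ∃ C, C < ⊤ ∧ ∀ x, G n x ≤ C)
    (Q : ℕ → X → Measure X) (hQ : ∀ n x, Q (n + 1) x = (G n x) • M (n + 1) x)
    (Qseq : ℕ → ℕ → X → Measure X)
    (hQseq0 : ∀ p x, Qseq p p x = Measure.dirac x)
    (hQseqS : ∀ p n x, p ≤ n → Qseq p (n + 1) x = (Qseq p n x).bind (Q (n + 1)))
    (γ : ℕ → Measure X) (hγ : ∀ n, γ n = μ.bind (Qseq 0 n))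
    (hγpos : ∀ n, 0 < γ n Set.univ) (hγfin : ∀ n, γ n Set.univ < ⊤)
    (η : ℕ → Measure X) (hη : ∀ n, η n = (γ n Set.univ)⁻¹ • γ n)
    (lam : ℕ → ℝ≥0∞) (hlam : ∀ n, lam n = ∫⁻ x, G n x ∂ η n)
    (V : X → ℝ) (hV1 : ∀ x, 1 ≤ V x) (hVunbdd : ∀ r : ℝ, ∃ x, r < V x)
    (v : X → ℝ≥0∞) (hv : ∀ x, v x = ENNReal.ofReal (Real.exp (V x)))
    (δ dlow : ℝ) (hδ : 0 < δ) (hdlow : 1 ≤ dlow)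
    -- (H1) multiplicative drift
    (hdrift : ∀ d : ℝ, dlow ≤ d → ∃ bd : ℝ, ∀ n x,
      ∫⁻ y, v y ∂ (Q (n + 1) x) ≤
        ENNReal.ofReal (Real.exp (V x * (1 - δ) +
          bd * Set.indicator {z | V z ≤ d} (fun _ => (1 : ℝ)) x)))
    -- (H3) local minorization
    (hminor : ∀ d : ℝ, dlow ≤ d → ∃ (ν : Measure X) (εminus : ℝ≥0∞),
      IsProbabilityMeasure ν ∧ 0 < εminus ∧ 0 < ν {z | V z ≤ d} ∧
      ∀ n x, V x ≤ d → ∀ A : Set X, MeasurableSet A →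
        εminus * ν ({z | V z ≤ d} ∩ A) ≤ Q (n + 1) x ({z | V z ≤ d} ∩ A))
    -- (1): uniformly bounded v-moments of the prediction filters
    (hbdd : (⨆ n, ∫⁻ x, v x ∂ η n) < ⊤) :
    0 < ⨅ n, lam n :=
  fk_eta_bounded_implies_lambda_bounded_below_general M hM G hGmeas Q hQ γ hγpos hγfin η hη lam hlam
    V v hv dlow hminor hbdd
end

section
/- Filter stability from multiplicative stability: suppose for all φ ∈ L_v, n ≥ 1 and x ∈ X, |Q_{0,n}(φ)(x)/∏_{q=0}^{n-1}λ_q − h_{0,n}(x)η_n(φ)| ≤ ρⁿ‖φ‖_v c_μ v(x) μ(v) with ρ < 1. Then for any probability measure μ' with μ'(v) < ∞ and μ'(C_d) > 0 for some d with inf_{n≥1} inf_{x∈C_d} h_{0,n}(x) > 0, there exists c_{μ,μ'} < ∞ such that ‖η_n^{(μ)} − η_n^{(μ')}‖_v ≤ ρⁿ c_{μ,μ'} μ(v)μ'(v), where η_n^{(μ')} := μ'Q_{0,n}/μ'Q_{0,n}(1). -/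
/-!
Write `Z' = μ' Q_{0,n}(1)` and `Λ = ∏_{q<n} λ_q`. Integrating the multiplicative stability bound
`|Q_{0,n}(φ)(x) - Λ h_{0,n}(x) η_n(φ)| ≤ Λ ρⁿ c_μ μ(v) v(x)` against `μ'` gives
`|μ' Q_{0,n}(φ) - Z' η_n(φ)| ≤ Λ ρⁿ c_μ μ(v) μ'(v)`, and dividing by `Z'` turns the left side
into `Z' |η_n^{(μ')}(φ) - η_n(φ)|`. Finally `Z' = Λ μ'(h_{0,n}) ≥ Λ · inf_{C_d} h_{0,n} · μ'(C_d)`,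
so `Λ` cancels. When `φ` is not integrable for `μ' Q_{0,n}`, the same bound applied to truncations
of `|φ|` shows that it is not `η_n`-integrable either, and both sides vanish.
-/

open MeasureTheory ProbabilityTheory

lemma lintegral_ofReal_le_of_integral_min_le {Y : Type*} [MeasurableSpace Y] {ν : Measure Y}
    [IsFiniteMeasure ν] {ψ : Y → ℝ} (hψ : Measurable ψ) (hψ0 : 0 ≤ ψ) {B : ℝ}
    (h : ∀ k : ℕ, ∫ y, min (ψ y) k ∂ν ≤ B) : ∫⁻ y, ENNReal.ofReal (ψ y) ∂ν ≤ ENNReal.ofReal B := by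
  have hsup : ∀ y, ENNReal.ofReal (ψ y) = ⨆ k : ℕ, ENNReal.ofReal (min (ψ y) k) := by
    intro y
    obtain ⟨k, hk⟩ := exists_nat_ge (ψ y)
    exact le_antisymm (le_iSup_of_le k (by rw [min_eq_left hk]))
      (iSup_le fun k ↦ ENNReal.ofReal_le_ofReal (min_le_left _ _))
  have hmeas : ∀ k : ℕ, Measurable fun y ↦ min (ψ y) k := fun k ↦ hψ.min measurable_const
  rw [lintegral_congr hsup, lintegral_iSup (fun k ↦ (hmeas k).ennreal_ofReal)
    fun k l hkl y ↦ ENNReal.ofReal_le_ofReal (min_le_min_left _ (Nat.cast_le.mpr hkl))]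
  refine iSup_le fun k ↦ ?_
  have hbdd : Integrable (fun y ↦ min (ψ y) k) ν :=
    (integrable_const (k : ℝ)).mono' (hmeas k).aestronglyMeasurable
      (Filter.Eventually.of_forall fun y ↦ by
        rw [Real.norm_eq_abs, abs_of_nonneg (le_min (hψ0 y) k.cast_nonneg)]
        exact min_le_right _ _)
  rw [← ofReal_integral_eq_lintegral_ofReal hbdd
    (Filter.Eventually.of_forall fun y ↦ le_min (hψ0 y) k.cast_nonneg)]
  exact ENNReal.ofReal_le_ofReal (h k)

namespace MeasureTheory.Measure

variable {X Y E : Type*} [MeasurableSpace X] [MeasurableSpace Y]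
  [NormedAddCommGroup E] [NormedSpace ℝ E] {μ : Measure X} {κ : X → Measure Y}

lemma aemeasurable_of_bind_ne_zero (h : μ.bind κ ≠ 0) : AEMeasurable κ μ := by
  by_contra hκ
  exact h (by rw [Measure.bind, Measure.map_of_not_aemeasurable hκ, Measure.join_zero])

lemma exists_kernel_ae_eq_bind_eq_comp (hκ : AEMeasurable κ μ) :
    ∃ κ' : Kernel X Y, κ =ᵐ[μ] κ' ∧ μ.bind κ = (κ' ∘ₖ Kernel.const Unit μ) () :=
  ⟨⟨hκ.mk κ, hκ.measurable_mk⟩, hκ.ae_eq_mk, by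
    rw [← comp_eq_comp_const_apply]
    exact bind_congr_right hκ.ae_eq_mk⟩

lemma integrable_integral_bind (hκ : AEMeasurable κ μ) {f : Y → E}
    (hf : Integrable f (μ.bind κ)) : Integrable (fun x ↦ ∫ y, f y ∂κ x) μ := by
  obtain ⟨κ', hκκ', hbind⟩ := exists_kernel_ae_eq_bind_eq_comp hκ
  rw [hbind] at hf
  refine hf.integral_comp.congr ?_
  filter_upwards [hκκ'] with x hx
  simp [hx]

lemma integral_bind (hκ : AEMeasurable κ μ) {f : Y → E} (hf : Integrable f (μ.bind κ)) :
    ∫ y, f y ∂μ.bind κ = ∫ x, ∫ y, f y ∂κ x ∂μ := by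
  obtain ⟨κ', hκκ', hbind⟩ := exists_kernel_ae_eq_bind_eq_comp hκ
  rw [hbind] at hf ⊢
  rw [Kernel.integral_comp hf]
  refine integral_congr_ae ?_
  filter_upwards [hκκ'] with x hx
  simp [hx]

lemma integrable_real_univ_of_bind (hκ : AEMeasurable κ μ) [IsFiniteMeasure (μ.bind κ)] :
    Integrable (fun x ↦ (κ x).real Set.univ) μ := by
  simpa using integrable_integral_bind hκ (integrable_const (1 : ℝ))

lemma integral_real_univ_of_bind (hκ : AEMeasurable κ μ) [IsFiniteMeasure (μ.bind κ)] :
    ∫ x, (κ x).real Set.univ ∂μ = (μ.bind κ).real Set.univ := by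
  simpa using (integral_bind hκ (integrable_const (1 : ℝ))).symm

lemma mul_measureReal_le_real_univ_bind [IsFiniteMeasure μ] (hκ : AEMeasurable κ μ)
    [IsFiniteMeasure (μ.bind κ)] {C : Set X} {b : ℝ} (hb0 : 0 ≤ b)
    (hb : ∀ x ∈ C, b ≤ (κ x).real Set.univ) : b * μ.real C ≤ (μ.bind κ).real Set.univ := by
  rw [← integral_real_univ_of_bind hκ]
  exact (mul_le_mul_of_nonneg_left (measureReal_mono hb) hb0).trans
    (mul_meas_ge_le_integral_of_nonneg (.of_forall fun _ ↦ measureReal_nonneg)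
      (integrable_real_univ_of_bind hκ) b)

lemma ae_isFiniteMeasure_of_bind (hκ : AEMeasurable κ μ) [IsFiniteMeasure (μ.bind κ)] :
    ∀ᵐ x ∂μ, IsFiniteMeasure (κ x) := by
  have h := ae_lt_top' ((measurable_coe MeasurableSet.univ).comp_aemeasurable hκ)
    (bind_apply MeasurableSet.univ hκ ▸ measure_ne_top (μ.bind κ) Set.univ)
  exact h.mono fun x hx ↦ ⟨hx⟩

lemma integrable_bind_of_ae_lintegral_le (hκ : AEMeasurable κ μ) {f : Y → ℝ}
    (hf : AEStronglyMeasurable f (μ.bind κ)) {w : X → ℝ} (hw : Integrable w μ)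
    (h : ∀ᵐ x ∂μ, ∫⁻ y, ‖f y‖ₑ ∂κ x ≤ ENNReal.ofReal (w x)) : Integrable f (μ.bind κ) := by
  refine ⟨hf, ?_⟩
  calc ∫⁻ y, ‖f y‖ₑ ∂μ.bind κ = ∫⁻ x, ∫⁻ y, ‖f y‖ₑ ∂κ x ∂μ := lintegral_bind hκ hf.enorm
    _ ≤ ∫⁻ x, ENNReal.ofReal (w x) ∂μ := lintegral_mono_ae h
    _ < ⊤ := hw.lintegral_lt_top

lemma abs_integral_bind_sub_le [IsFiniteMeasure (μ.bind κ)] (hκ : AEMeasurable κ μ)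
    {f : Y → ℝ} (hf : Integrable f (μ.bind κ)) (a : ℝ) {w : X → ℝ} (hw : Integrable w μ)
    (h : ∀ x, |∫ y, f y ∂κ x - (κ x).real Set.univ * a| ≤ w x) :
    |∫ y, f y ∂μ.bind κ - (μ.bind κ).real Set.univ * a| ≤ ∫ x, w x ∂μ := by
  have hint := (integrable_real_univ_of_bind hκ).mul_const a
  rw [← integral_real_univ_of_bind hκ, ← integral_mul_const, integral_bind hκ hf,
    ← integral_sub (integrable_integral_bind hκ hf) hint]
  exact (abs_integral_le_integral_abs).trans
    (integral_mono ((integrable_integral_bind hκ hf).sub hint).abs hw h)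

end MeasureTheory.Measure

section Stability

variable {X Y : Type*} [MeasurableSpace Y]

/-- The multiplicative stability bound of the paper, multiplied through by `∏ λ_q`: `κ` plays the
role of `Q_{0,n}`, so that `(κ x).real univ` is `∏ λ_q · h_{0,n}(x)`, and `w` is
`∏ λ_q · ρⁿ c_μ μ(v) · v`. -/
def MultiplicativelyStable (κ : X → Measure Y) (η : Measure Y) (v : Y → ℝ) (w : X → ℝ) :
    Prop :=
  ∀ ψ : Y → ℝ, Measurable ψ → (∀ y, |ψ y| ≤ v y) → ∀ x,
    |∫ y, ψ y ∂κ x - (κ x).real Set.univ * ∫ y, ψ y ∂η| ≤ w x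

variable {κ : X → Measure Y} {η : Measure Y} {v : Y → ℝ} {w : X → ℝ} {φ : Y → ℝ}

lemma MultiplicativelyStable.of_div {Λ : ℝ} (hΛ : 0 < Λ) {h u : X → ℝ}
    (hh : ∀ x, h x = (κ x).real Set.univ / Λ)
    (hbound : ∀ ψ : Y → ℝ, Measurable ψ → (∀ y, |ψ y| ≤ v y) → ∀ x,
      |(∫ y, ψ y ∂κ x) / Λ - h x * ∫ y, ψ y ∂η| ≤ u x) :
    MultiplicativelyStable κ η v fun x ↦ Λ * u x := by
  intro ψ hψm hψv x
  have hscale : ∫ y, ψ y ∂κ x - (κ x).real Set.univ * ∫ y, ψ y ∂η =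
      Λ * ((∫ y, ψ y ∂κ x) / Λ - h x * ∫ y, ψ y ∂η) := by
    rw [hh]
    field_simp
  rw [hscale, abs_mul, abs_of_pos hΛ]
  exact mul_le_mul_of_nonneg_left (hbound ψ hψm hψv x) hΛ.le

variable [MeasurableSpace X] {μ : Measure X}

lemma MultiplicativelyStable.integrable_bind (hst : MultiplicativelyStable κ η v w)
    (hκ : AEMeasurable κ μ) [IsFiniteMeasure (μ.bind κ)] (hw : Integrable w μ)
    (hφm : Measurable φ) (hφv : ∀ y, |φ y| ≤ v y) (hφ : Integrable φ η) :
    Integrable φ (μ.bind κ) := by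
  refine Measure.integrable_bind_of_ae_lintegral_le hκ hφm.aestronglyMeasurable
    (((Measure.integrable_real_univ_of_bind hκ).mul_const (∫ y, |φ y| ∂η)).add hw) ?_
  filter_upwards [Measure.ae_isFiniteMeasure_of_bind hκ] with x hx
  simp_rw [Real.enorm_eq_ofReal_abs]
  refine lintegral_ofReal_le_of_integral_min_le hφm.abs (fun y ↦ abs_nonneg _) fun k ↦ ?_
  have htrunc := hst (fun y ↦ min |φ y| k) (hφm.abs.min measurable_const)
    (fun y ↦ by
      rw [abs_of_nonneg (le_min (abs_nonneg _) k.cast_nonneg)]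
      exact (min_le_left _ _).trans (hφv y)) x
  have hη : ∫ y, min |φ y| k ∂η ≤ ∫ y, |φ y| ∂η :=
    integral_mono_of_nonneg (Filter.Eventually.of_forall fun y ↦ le_min (abs_nonneg _)
      k.cast_nonneg) hφ.abs (Filter.Eventually.of_forall fun y ↦ min_le_left _ _)
  have hηscaled := mul_le_mul_of_nonneg_left hη (measureReal_nonneg (μ := κ x) (s := Set.univ))
  show _ ≤ _ + w x
  linarith [(abs_le.mp htrunc).2]

theorem MultiplicativelyStable.abs_integral_sub_integral_normalized_bind_le
    (hst : MultiplicativelyStable κ η v w) [IsFiniteMeasure (μ.bind κ)] [NeZero (μ.bind κ)]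
    (hw : Integrable w μ) (hφm : Measurable φ) (hφv : ∀ y, |φ y| ≤ v y) :
    |∫ y, φ y ∂η - ∫ y, φ y ∂(μ.bind κ Set.univ)⁻¹ • μ.bind κ| ≤
      (∫ x, w x ∂μ) / (μ.bind κ).real Set.univ := by
  have hκ := Measure.aemeasurable_of_bind_ne_zero (NeZero.ne (μ.bind κ))
  have hZ : 0 < (μ.bind κ).real Set.univ := measureReal_univ_pos
  rw [integral_smul_measure, ENNReal.toReal_inv, smul_eq_mul]
  by_cases hφ : Integrable φ (μ.bind κ)
  · have key := Measure.abs_integral_bind_sub_le hκ hφ (∫ y, φ y ∂η) hw (hst φ hφm hφv)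
    rw [← measureReal_def]
    have hdiff : ∫ y, φ y ∂η - ((μ.bind κ).real Set.univ)⁻¹ * ∫ y, φ y ∂μ.bind κ =
        -(∫ y, φ y ∂μ.bind κ - (μ.bind κ).real Set.univ * ∫ y, φ y ∂η) /
          (μ.bind κ).real Set.univ := by
      field_simp
      ring
    rw [hdiff, abs_div, abs_neg, abs_of_pos hZ]
    exact div_le_div_of_nonneg_right key hZ.le
  · have hw0 : 0 ≤ w := fun x ↦ (abs_nonneg _).trans <| hst 0 measurable_const
      (fun y ↦ by simpa using (abs_nonneg _).trans (hφv y)) x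
    -- `φ` is not `η`-integrable either, so both integrals take the junk value `0`
    rw [integral_undef hφ, integral_undef (mt (hst.integrable_bind hκ hw hφm hφv) hφ)]
    simpa using div_nonneg (integral_nonneg hw0) hZ.le

end Stability

theorem fk_filter_stability_general
    {X : Type*} [MeasurableSpace X]
    (μ μ' : Measure X) [IsProbabilityMeasure μ']
    (Qseq : ℕ → ℕ → X → Measure X)
    -- prediction filters for initial conditions μ and μ'
    (η η' : ℕ → Measure X)
    (hη' : ∀ n, η' n = ((μ'.bind (Qseq 0 n)) Set.univ)⁻¹ • μ'.bind (Qseq 0 n))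
    (hZ' : ∀ n, 0 < (μ'.bind (Qseq 0 n)) Set.univ ∧ (μ'.bind (Qseq 0 n)) Set.univ < ⊤)
    -- λ-values and h-functions, defined with respect to μ
    (lam : ℕ → ℝ) (hlampos : ∀ q, 0 < lam q)
    (h0 : ℕ → X → ℝ)
    (hh0 : ∀ n x, h0 n x =
      ((Qseq 0 n x Set.univ).toReal) / ∏ q ∈ Finset.range n, lam q)
    -- weighting function v = e^V
    (v : X → ℝ) (hv1 : ∀ x, 1 ≤ v x)
    (hμ'v : Integrable v μ')
    -- multiplicative stability hypothesis (Theorem MET)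
    (ρ c : ℝ) (hρ0 : 0 ≤ ρ) (hc : 0 ≤ c)
    (hstab : ∀ (φ : X → ℝ) (K : ℝ), Measurable φ → (∀ x, |φ x| ≤ K * v x) →
      ∀ n, 1 ≤ n → ∀ x,
        |(∫ y, φ y ∂ (Qseq 0 n x)) / ∏ q ∈ Finset.range n, lam q -
            h0 n x * ∫ y, φ y ∂ η n| ≤
          ρ ^ n * K * c * v x * ∫ y, v y ∂ μ)
    -- μ' charges a set on which the h-functions are uniformly bounded below
    (Cd : Set X) (hμ'Cd : 0 < μ' Cd)
    (h0lb : ℝ) (hh0lb : 0 < h0lb)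
    (hinf : ∀ n, 1 ≤ n → ∀ x ∈ Cd, h0lb ≤ h0 n x) :
    ∃ c' : ℝ, ∀ n, 1 ≤ n → ∀ φ : X → ℝ, Measurable φ → (∀ x, |φ x| ≤ v x) →
      |(∫ x, φ x ∂ η n) - ∫ x, φ x ∂ η' n| ≤
        ρ ^ n * c' * (∫ x, v x ∂ μ) * ∫ x, v x ∂ μ' := by
  have hv0 : 0 ≤ v := fun x ↦ zero_le_one.trans (hv1 x)
  have hδ : 0 < h0lb * μ'.real Cd :=
    mul_pos hh0lb (ENNReal.toReal_pos hμ'Cd.ne' (measure_ne_top μ' Cd))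
  refine ⟨c / (h0lb * μ'.real Cd), fun n hn φ hφm hφv ↦ ?_⟩
  have : IsFiniteMeasure (μ'.bind (Qseq 0 n)) := ⟨(hZ' n).2⟩
  have : NeZero (μ'.bind (Qseq 0 n)) := ⟨Measure.measure_univ_ne_zero.mp (hZ' n).1.ne'⟩
  set Λ := ∏ q ∈ Finset.range n, lam q
  have hΛ : 0 < Λ := Finset.prod_pos fun q _ ↦ hlampos q
  set r := ρ ^ n * c * ∫ y, v y ∂μ
  have hr : 0 ≤ r := by have := integral_nonneg hv0 (μ := μ); positivity
  have hst : MultiplicativelyStable (Qseq 0 n) (η n) v fun x ↦ Λ * (r * v x) :=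
    .of_div hΛ (hh0 n) fun ψ hψm hψv x ↦
      (hstab ψ 1 hψm (by simpa using hψv) n hn x).trans_eq (by ring)
  have hlow : Λ * h0lb * μ'.real Cd ≤ (μ'.bind (Qseq 0 n)).real Set.univ :=
    Measure.mul_measureReal_le_real_univ_bind
      (Measure.aemeasurable_of_bind_ne_zero (NeZero.ne _)) (by positivity) fun x hx ↦ by
        rw [measureReal_def, ← le_div_iff₀' hΛ, ← hh0]
        exact hinf n hn x hx
  rw [hη' n]
  refine (hst.abs_integral_sub_integral_normalized_bind_le
    ((hμ'v.const_mul r).const_mul Λ) hφm hφv).trans ?_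
  rw [integral_const_mul, integral_const_mul]
  calc Λ * (r * ∫ x, v x ∂μ') / (μ'.bind (Qseq 0 n)).real Set.univ
      ≤ Λ * (r * ∫ x, v x ∂μ') / (Λ * h0lb * μ'.real Cd) := by
        refine div_le_div_of_nonneg_left ?_ (by rw [mul_assoc]; exact mul_pos hΛ hδ) hlow
        exact mul_nonneg hΛ.le (mul_nonneg hr (integral_nonneg hv0))
    _ = ρ ^ n * (c / (h0lb * μ'.real Cd)) * (∫ x, v x ∂μ) * ∫ x, v x ∂μ' := by
        simp only [r]
        field_simp

/-- filter stability from multiplicative stability.  Suppose that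
for every `φ ∈ L_v` (i.e. `|φ| ≤ K·v`), every `n ≥ 1` and `x`:
`|Q_{0,n}(φ)(x)/∏_{q<n}λ_q − h_{0,n}(x) η_n(φ)| ≤ ρⁿ K c_μ v(x) μ(v)` with `ρ < 1`.
Then for any probability measure `μ'` with `μ'(v) < ∞`, `μ'(C_d) > 0` for a set
`C_d` on which the `h_{0,n}` are uniformly bounded below, there is
`c_{μ,μ'} < ∞` with `‖η_n^{(μ)} − η_n^{(μ')}‖_v ≤ ρⁿ c_{μ,μ'} μ(v) μ'(v)`. -/
theorem fk_filter_stability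
    {X : Type*} [MeasurableSpace X]
    (μ μ' : Measure X) [IsProbabilityMeasure μ] [IsProbabilityMeasure μ']
    (M : ℕ → X → Measure X) (hM : ∀ n x, IsProbabilityMeasure (M n x))
    (G : ℕ → X → ℝ) (hGmeas : ∀ n, Measurable (G n))
    (hGpos : ∀ n x, 0 < G n x) (hGbdd : ∀ n, ∃ C : ℝ, ∀ x, G n x ≤ C)
    (Q : ℕ → X → Measure X)
    (hQ : ∀ n x, Q (n + 1) x = (ENNReal.ofReal (G n x)) • M (n + 1) x)
    (Qseq : ℕ → ℕ → X → Measure X)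
    (hQseq0 : ∀ p x, Qseq p p x = Measure.dirac x)
    (hQseqS : ∀ p n x, p ≤ n → Qseq p (n + 1) x = (Qseq p n x).bind (Q (n + 1)))
    -- prediction filters for initial conditions μ and μ'
    (η η' : ℕ → Measure X)
    (hη : ∀ n, η n = ((μ.bind (Qseq 0 n)) Set.univ)⁻¹ • μ.bind (Qseq 0 n))
    (hη' : ∀ n, η' n = ((μ'.bind (Qseq 0 n)) Set.univ)⁻¹ • μ'.bind (Qseq 0 n))
    (hZ : ∀ n, 0 < (μ.bind (Qseq 0 n)) Set.univ ∧ (μ.bind (Qseq 0 n)) Set.univ < ⊤)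
    (hZ' : ∀ n, 0 < (μ'.bind (Qseq 0 n)) Set.univ ∧ (μ'.bind (Qseq 0 n)) Set.univ < ⊤)
    -- λ-values and h-functions, defined with respect to μ
    (lam : ℕ → ℝ) (hlam : ∀ q, lam q = ∫ x, G q x ∂ η q) (hlampos : ∀ q, 0 < lam q)
    (h0 : ℕ → X → ℝ)
    (hh0 : ∀ n x, h0 n x =
      ((Qseq 0 n x Set.univ).toReal) / ∏ q ∈ Finset.range n, lam q)
    -- weighting function v = e^V
    (v : X → ℝ) (hv1 : ∀ x, 1 ≤ v x) (hvmeas : Measurable v)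
    (hμv : Integrable v μ) (hμ'v : Integrable v μ')
    -- multiplicative stability hypothesis (Theorem MET)
    (ρ c : ℝ) (hρ0 : 0 ≤ ρ) (hρ1 : ρ < 1) (hc : 0 ≤ c)
    (hstab : ∀ (φ : X → ℝ) (K : ℝ), Measurable φ → (∀ x, |φ x| ≤ K * v x) →
      ∀ n, 1 ≤ n → ∀ x,
        |(∫ y, φ y ∂ (Qseq 0 n x)) / ∏ q ∈ Finset.range n, lam q -
            h0 n x * ∫ y, φ y ∂ η n| ≤
          ρ ^ n * K * c * v x * ∫ y, v y ∂ μ)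
    -- μ' charges a set on which the h-functions are uniformly bounded below
    (Cd : Set X) (hμ'Cd : 0 < μ' Cd)
    (h0lb : ℝ) (hh0lb : 0 < h0lb)
    (hinf : ∀ n, 1 ≤ n → ∀ x ∈ Cd, h0lb ≤ h0 n x) :
    ∃ c' : ℝ, ∀ n, 1 ≤ n → ∀ φ : X → ℝ, Measurable φ → (∀ x, |φ x| ≤ v x) →
      |(∫ x, φ x ∂ η n) - ∫ x, φ x ∂ η' n| ≤
        ρ ^ n * c' * (∫ x, v x ∂ μ) * ∫ x, v x ∂ μ' :=
  fk_filter_stability_general μ μ' Qseq η η' hη' hZ' lam hlampos h0 hh0 v hv1 hμ'v ρ c hρ0 hc hstab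
    Cd hμ'Cd h0lb hh0lb hinf
end

section
/- Supermartingale norm bound: let A_p := |||Q_p 1_{C_d^c}|||_v and B_p := |||Q_p 1_{C_d}|||_v, and define Ξ_0 := v(X_p), Ξ_j := [∏_{q=p}^{p+j-1} G_q(X_q)/(A_{q+1}^{1_{C_d^c}(X_q)} B_{q+1}^{1_{C_d}(X_q)})]·v(X_{p+j}). Then E_{p+j-1,X_{p+j-1}}[Ξ_j] ≤ Ξ_{j-1} for 1 ≤ j ≤ n−p, and hence E_{p,x}[Ξ_{n-p}] ≤ v(x). -/
open MeasureTheory ENNReal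

/-- Expectation of a path functional for the non-homogeneous Markov chain with
kernels `M`, started at time `p` with remaining horizon `k`. -/
noncomputable def EE {X : Type*} [MeasurableSpace X]
    (M : ℕ → X → MeasureTheory.Measure X) (φ : (ℕ → X) → ℝ≥0∞) :
    ℕ → ℕ → (ℕ → X) → ℝ≥0∞
  | _, 0, path => φ path
  | p, k + 1, path =>
      ∫⁻ y, EE M φ (p + 1) k (Function.update path (p + 1) y) ∂ (M (p + 1) (path p))

/-!
Write `D_q(x) = A_{q+1}^{1_{C^c}(x)} B_{q+1}^{1_C(x)}`. Since `Q_{q+1} = G_q M_{q+1}`, the weighted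
bound says that multiplying by `G_q(X_q)/D_q(X_q)` compensates the one-step growth of `v` under
`M_{q+1}`. The weights up to time `p + j` depend only on `X_p, …, X_{p+j-1}`, so integrating out
`X_{p+j}` multiplies `Ξ_j` by at most one such factor, giving the supermartingale inequality;
integrating out `X_n, X_{n-1}, …, X_{p+1}` in turn bounds `E_{p,x}[Ξ_{n-p}]` by `Ξ_0 = v(x)`.
-/

section

variable {X : Type*}

theorem Finset.prod_Ico_update_eq {α : Type*} [CommMonoid α] (f : ℕ → X → α) (path : ℕ → X)
    (a b : ℕ) (y : X) :
    ∏ q ∈ Finset.Ico a b, f q (Function.update path b y q) = ∏ q ∈ Finset.Ico a b, f q (path q) :=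
  Finset.prod_congr rfl fun _ hq => by rw [Function.update_of_ne (Finset.mem_Ico.1 hq).2.ne]

theorem EE_le_of_step [MeasurableSpace X] (M : ℕ → X → Measure X) (F : ℕ → (ℕ → X) → ℝ≥0∞)
    (p : ℕ) (hF : ∀ j path, ∫⁻ y, F (j + 1) (Function.update path (p + j + 1) y)
      ∂M (p + j + 1) (path (p + j)) ≤ F j path)
    (k : ℕ) (path : ℕ → X) : EE M (F k) p k path ≤ F 0 path := by
  induction k generalizing p F path with
  | zero => rfl
  | succ k ih =>
    have hF_shift : ∀ j path, ∫⁻ y, F (j + 1 + 1) (Function.update path (p + 1 + j + 1) y)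
        ∂M (p + 1 + j + 1) (path (p + 1 + j)) ≤ F (j + 1) path := by
      intro j path
      rw [add_right_comm p 1 j]
      exact hF (j + 1) path
    calc EE M (F (k + 1)) p (k + 1) path
        ≤ ∫⁻ y, F 1 (Function.update path (p + 1) y) ∂M (p + 1) (path p) :=
          lintegral_mono fun y => ih (p := p + 1) (F := fun j => F (j + 1)) hF_shift _
      _ ≤ F 0 path := hF 0 path

noncomputable def weightedProcess (w : ℕ → X → ℝ≥0∞) (v : X → ℝ≥0∞) (p j : ℕ) (path : ℕ → X) :
    ℝ≥0∞ :=
  (∏ q ∈ Finset.Ico p (p + j), w q (path q)) * v (path (p + j))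

theorem weightedProcess_zero (w : ℕ → X → ℝ≥0∞) (v : X → ℝ≥0∞) (p : ℕ) (path : ℕ → X) :
    weightedProcess w v p 0 path = v (path p) := by
  simp [weightedProcess]

theorem weightedProcess_step [MeasurableSpace X] (M : ℕ → X → Measure X) (w : ℕ → X → ℝ≥0∞)
    (v : X → ℝ≥0∞) (hv : Measurable v) (hw : ∀ q x, w q x * ∫⁻ y, v y ∂M (q + 1) x ≤ v x)
    (p j : ℕ) (path : ℕ → X) :
    ∫⁻ y, weightedProcess w v p (j + 1) (Function.update path (p + j + 1) y)
      ∂M (p + j + 1) (path (p + j)) ≤ weightedProcess w v p j path := by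
  set x := path (p + j)
  calc ∫⁻ y, weightedProcess w v p (j + 1) (Function.update path (p + j + 1) y)
        ∂M (p + j + 1) x
      = ∫⁻ y, (∏ q ∈ Finset.Ico p (p + j + 1), w q (path q)) * v y ∂M (p + j + 1) x := by
        simp only [weightedProcess, ← add_assoc, Finset.prod_Ico_update_eq, Function.update_self]
    _ = (∏ q ∈ Finset.Ico p (p + j), w q (path q)) *
          (w (p + j) x * ∫⁻ y, v y ∂M (p + j + 1) x) := by
        rw [lintegral_const_mul _ hv, Finset.prod_Ico_succ_top (Nat.le_add_right p j), mul_assoc]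
    _ ≤ weightedProcess w v p j path := by
        rw [weightedProcess]
        gcongr
        exact hw (p + j) x

end

theorem fk_supermartingale_norm_bound_general
    {X : Type*} [MeasurableSpace X]
    (M : ℕ → X → Measure X)
    (G : ℕ → X → ℝ≥0∞)
    (Q : ℕ → X → Measure X) (hQ : ∀ q x, Q (q + 1) x = (G q x) • M (q + 1) x)
    (v : X → ℝ≥0∞) (hvmeas : Measurable v)
    (Cd : Set X)
    (A B : ℕ → ℝ≥0∞)
    -- the weighted one-step bound Q_{q+1}(v)(x) ≤ A_{q+1}^{1_{C^c}(x)} B_{q+1}^{1_C(x)} v(x)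
    (hkey : ∀ q x, ∫⁻ y, v y ∂ (Q (q + 1) x) ≤
      (Set.indicator Cd (fun _ => B (q + 1)) x +
        Set.indicator Cdᶜ (fun _ => A (q + 1)) x) * v x)
    (p n : ℕ)
    -- the supermartingale sequence Ξ
    (Xi : ℕ → (ℕ → X) → ℝ≥0∞)
    (hXi : ∀ j path, Xi j path =
      (∏ q ∈ Finset.Ico p (p + j),
        G q (path q) /
          (Set.indicator Cd (fun _ => B (q + 1)) (path q) +
            Set.indicator Cdᶜ (fun _ => A (q + 1)) (path q))) * v (path (p + j))) :
    (∀ j, 1 ≤ j → j ≤ n - p → ∀ path : ℕ → X,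
      ∫⁻ y, Xi j (Function.update path (p + j) y)
          ∂ (M (p + j) (path (p + j - 1))) ≤ Xi (j - 1) path) ∧
    (∀ x, EE M (Xi (n - p)) p (n - p) (fun _ => x) ≤ v x) := by
  set w : ℕ → X → ℝ≥0∞ := fun q x => G q x /
    (Set.indicator Cd (fun _ => B (q + 1)) x + Set.indicator Cdᶜ (fun _ => A (q + 1)) x)
  have hw : ∀ q x, w q x * ∫⁻ y, v y ∂M (q + 1) x ≤ v x := fun q x => by
    dsimp only [w]
    rw [← ENNReal.mul_div_right_comm]
    refine ENNReal.div_le_of_le_mul' ?_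
    simpa only [hQ, lintegral_smul_measure, smul_eq_mul] using hkey q x
  obtain rfl : Xi = weightedProcess w v p := funext₂ hXi
  have hstep := weightedProcess_step M w v hvmeas hw p
  refine ⟨fun j hj _ path => ?_, fun x => ?_⟩
  · obtain ⟨i, rfl⟩ := Nat.exists_eq_add_of_le' hj
    exact hstep i path
  · simpa only [weightedProcess_zero] using EE_le_of_step M _ p hstep (n - p) fun _ => x

/-- supermartingale norm bound.  With
`Ξ_0 = v(X_p)` and
`Ξ_j = [∏_{q=p}^{p+j-1} G_q(X_q)/(A_{q+1}^{1_{C^c}(X_q)} B_{q+1}^{1_C(X_q)})]·v(X_{p+j})`,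
where the weighted bound `Q_{q+1}(v)(x) ≤ A_{q+1}^{1_{C^c}(x)} B_{q+1}^{1_C(x)} v(x)`
holds, one has `E_{p+j-1,X_{p+j-1}}[Ξ_j] ≤ Ξ_{j-1}` for `1 ≤ j ≤ n−p`, and hence
`E_{p,x}[Ξ_{n-p}] ≤ v(x)`. -/
theorem fk_supermartingale_norm_bound
    {X : Type*} [MeasurableSpace X]
    (M : ℕ → X → Measure X) (hM : ∀ q x, IsProbabilityMeasure (M q x))
    (G : ℕ → X → ℝ≥0∞) (hGmeas : ∀ q, Measurable (G q)) (hGpos : ∀ q x, 0 < G q x)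
    (Q : ℕ → X → Measure X) (hQ : ∀ q x, Q (q + 1) x = (G q x) • M (q + 1) x)
    (v : X → ℝ≥0∞) (hv1 : ∀ x, 1 ≤ v x) (hvmeas : Measurable v)
    (Cd : Set X) (hCd : MeasurableSet Cd)
    (A B : ℕ → ℝ≥0∞)
    (hApos : ∀ q, 0 < A q) (hAfin : ∀ q, A q < ⊤)
    (hBpos : ∀ q, 0 < B q) (hBfin : ∀ q, B q < ⊤)
    -- the weighted one-step bound Q_{q+1}(v)(x) ≤ A_{q+1}^{1_{C^c}(x)} B_{q+1}^{1_C(x)} v(x)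
    (hkey : ∀ q x, ∫⁻ y, v y ∂ (Q (q + 1) x) ≤
      (Set.indicator Cd (fun _ => B (q + 1)) x +
        Set.indicator Cdᶜ (fun _ => A (q + 1)) x) * v x)
    (p n : ℕ) (hpn : p ≤ n)
    -- the supermartingale sequence Ξ
    (Xi : ℕ → (ℕ → X) → ℝ≥0∞)
    (hXi : ∀ j path, Xi j path =
      (∏ q ∈ Finset.Ico p (p + j),
        G q (path q) /
          (Set.indicator Cd (fun _ => B (q + 1)) (path q) +
            Set.indicator Cdᶜ (fun _ => A (q + 1)) (path q))) * v (path (p + j))) :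
    (∀ j, 1 ≤ j → j ≤ n - p → ∀ path : ℕ → X,
      ∫⁻ y, Xi j (Function.update path (p + j) y)
          ∂ (M (p + j) (path (p + j - 1))) ≤ Xi (j - 1) path) ∧
    (∀ x, EE M (Xi (n - p)) p (n - p) (fun _ => x) ≤ v x) :=
  fk_supermartingale_norm_bound_general M G Q hQ v hvmeas Cd A B hkey p n Xi hXi
end
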